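/- Let m ≥ 4. The cycle sun CS_m (obtained from the cycle on u₁, …, u_m by adding new vertices v₁, …, v_m with each u_i adjacent to v_{i−1} and v_i, indices taken modulo m) satisfies η(CS_m) = 2, and the wheel sun WS_m (obtained from CS_m by adding one further vertex w adjacent to u₁, …, u_m) satisfies η(WS_m) = 2. -/

import Mathlib

/-!
Giving every vertex the label 1 makes the neighbourhood sum of a vertex its degree, and
adjacent cycle vertices have equal degree, so `η ≥ 2` for both graphs.

For `η ≤ 2`, write `σ` for the neighbourhood sum, label the cycle vertices by `aᵢ ∈ {1, 2}` with
no three cyclically consecutive labels equal, and each sun vertex `vᵢ` by `3 - aᵢ`. Then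
`σ(uᵢ) = 6 + aᵢ₊₁ - aᵢ`, so `σ(uᵢ) = σ(uᵢ₊₁)` would force `aᵢ = aᵢ₊₁ = aᵢ₊₂`, and
`σ(uᵢ) ≥ 5 > 4 ≥ σ(vⱼ)`. The alternating labels `1 + i % 2` qualify. A hub labelled `h` raises
every `σ(uᵢ)` by `h` and has sum `∑ aᵢ = m + m / 2`, which avoids `[5 + h, 7 + h]` for
`h = 2` when `m ≤ 4` and `h = 1` when `m ≥ 6`.
-/

open Classical in
/-- Sum of the labels `f` over the open neighborhood of `v` in `G`. -/
noncomputable def nbrSum {V : Type*} [Fintype V] (G : SimpleGraph V) (f : V → ℕ) (v : V) : ℕ :=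
  ∑ w ∈ Finset.univ.filter (fun w => G.Adj v w), f w

open Classical in
/-- The degree of `v` in `G`. -/
noncomputable def deg {V : Type*} [Fintype V] (G : SimpleGraph V) (v : V) : ℕ :=
  (Finset.univ.filter (fun w => G.Adj v w)).card

/-- `f : V → {1,…,k}` is an additive `k`-coloring of `G`: labels lie in `{1,…,k}` and
adjacent vertices get distinct open-neighborhood sums. -/
def IsAdditiveColoring {V : Type*} [Fintype V] (G : SimpleGraph V) (k : ℕ) (f : V → ℕ) : Prop :=
  (∀ v, 1 ≤ f v ∧ f v ≤ k) ∧ ∀ u v, G.Adj u v → nbrSum G f u ≠ nbrSum G f v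

/-- The additive chromatic number `η(G)`: the least `k` admitting an additive `k`-coloring. -/
noncomputable def eta {V : Type*} [Fintype V] (G : SimpleGraph V) : ℕ :=
  sInf {k | ∃ f : V → ℕ, IsAdditiveColoring G k f}

/-- The cycle sun `CS_m`: `Sum.inl i` is `uᵢ`, `Sum.inr i` is `vᵢ`;
the `uᵢ` form a cycle, and `uᵢ` is adjacent to `vᵢ` and `v_{i-1}` (indices mod `m`). -/
def cycleSun (m : ℕ) : SimpleGraph (Fin m ⊕ Fin m) where
  Adj x y :=
    match x, y with
    | Sum.inl i, Sum.inl j => i ≠ j ∧ ((i.val + 1) % m = j.val ∨ (j.val + 1) % m = i.val)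
    | Sum.inl i, Sum.inr j => j = i ∨ (j.val + 1) % m = i.val
    | Sum.inr j, Sum.inl i => j = i ∨ (j.val + 1) % m = i.val
    | Sum.inr _, Sum.inr _ => False
  symm := by
    constructor
    rintro (i | i) (j | j) h
    · exact ⟨h.1.symm, h.2.symm⟩
    · exact h
    · exact h
    · exact h.elim
  loopless := by
    constructor
    rintro (i | i) h
    · exact h.1 rfl
    · exact h

/-- The wheel sun `WS_m`: the cycle sun together with a hub `Sum.inr 0`
adjacent to `u₁, …, u_m` (and to none of the `vᵢ`). -/
def wheelSun (m : ℕ) : SimpleGraph ((Fin m ⊕ Fin m) ⊕ Fin 1) where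
  Adj x y :=
    match x, y with
    | Sum.inl a, Sum.inl b => (cycleSun m).Adj a b
    | Sum.inl (Sum.inl _), Sum.inr _ => True
    | Sum.inr _, Sum.inl (Sum.inl _) => True
    | _, _ => False
  symm := by
    constructor
    rintro ((i | i) | w) ((j | j) | w') h
    all_goals first
      | exact (cycleSun m).adj_symm h
      | trivial
      | exact h.elim
  loopless := by
    constructor
    rintro ((i | i) | w) h
    · exact (cycleSun m).irrefl h
    · exact (cycleSun m).irrefl h
    · exact h

section General

variable {V : Type*} [Fintype V] {G : SimpleGraph V}

theorem nbrSum_eq_sum {f : V → ℕ} {v : V} {s : Finset V} (hs : ∀ w, w ∈ s ↔ G.Adj v w) :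
    nbrSum G f v = ∑ w ∈ s, f w := by
  unfold nbrSum
  congr
  ext w
  simp [hs]

theorem nbrSum_one (v : V) : nbrSum G (fun _ => 1) v = deg G v := by
  simp [nbrSum, deg]

theorem two_le_of_isAdditiveColoring {k : ℕ} {f : V → ℕ} (hf : IsAdditiveColoring G k f)
    {u v : V} (huv : G.Adj u v) (hdeg : deg G u = deg G v) : 2 ≤ k := by
  by_contra! hk
  have hone : f = fun _ => 1 := funext fun w => by have := hf.1 w; omega
  exact hf.2 u v huv (by rw [hone, nbrSum_one, nbrSum_one, hdeg])

theorem eta_eq_two (hcol : ∃ f, IsAdditiveColoring G 2 f) {u v : V} (huv : G.Adj u v)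
    (hdeg : deg G u = deg G v) : eta G = 2 := by
  unfold eta
  have hmem : 2 ∈ {k | ∃ f, IsAdditiveColoring G k f} := hcol
  obtain ⟨f, hf⟩ := Nat.sInf_mem ⟨2, hmem⟩
  exact le_antisymm (Nat.sInf_le hmem) (two_le_of_isAdditiveColoring hf huv hdeg)

end General

namespace Fin

variable {m : ℕ} [NeZero m]

theorem val_add_one_mod_eq_iff {i j : Fin m} : (i.val + 1) % m = j.val ↔ i + 1 = j := by
  rw [Fin.ext_iff, Fin.val_add, Fin.val_one', Nat.add_mod_mod]

theorem self_ne_add_one (hm : 2 ≤ m) (i : Fin m) : i ≠ i + 1 := by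
  simp only [ne_eq, left_eq_add, Fin.one_eq_zero_iff]
  omega

theorem sub_one_ne_self (hm : 2 ≤ m) (i : Fin m) : i - 1 ≠ i := by
  simpa [eq_sub_iff_add_eq] using (Fin.self_ne_add_one hm (i - 1)).symm

theorem add_one_ne_sub_one (hm : 3 ≤ m) (i : Fin m) : i + 1 ≠ i - 1 := by
  intro h
  have htwo : (1 + 1 : Fin m) = 0 := by
    rw [← add_eq_left (a := i), ← add_assoc, h, sub_add_cancel]
  have := congrArg Fin.val htwo
  rw [Fin.val_add, Fin.val_one', Nat.mod_eq_of_lt (by omega : 1 < m),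
    Nat.mod_eq_of_lt (by omega : 1 + 1 < m)] at this
  simp at this

end Fin

section CycleSun

variable {m : ℕ} [NeZero m]

theorem cycleSun_adj_inl_inl (hm : 2 ≤ m) (i j : Fin m) :
    (cycleSun m).Adj (.inl i) (.inl j) ↔ j = i + 1 ∨ j = i - 1 := by
  change i ≠ j ∧ _ ↔ _
  rw [Fin.val_add_one_mod_eq_iff, Fin.val_add_one_mod_eq_iff, eq_comm (a := i + 1),
    ← eq_sub_iff_add_eq]
  refine and_iff_right_of_imp ?_
  rintro (rfl | rfl)
  · exact Fin.self_ne_add_one hm i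
  · exact (Fin.sub_one_ne_self hm i).symm

theorem cycleSun_adj_inl_inr (i j : Fin m) :
    (cycleSun m).Adj (.inl i) (.inr j) ↔ j = i ∨ j = i - 1 := by
  change _ ∨ _ ↔ _
  rw [Fin.val_add_one_mod_eq_iff, eq_sub_iff_add_eq]

theorem cycleSun_adj_inr_inl (i j : Fin m) :
    (cycleSun m).Adj (.inr j) (.inl i) ↔ i = j ∨ i = j + 1 := by
  change _ ∨ _ ↔ _
  rw [Fin.val_add_one_mod_eq_iff, eq_comm (a := j), eq_comm (a := j + 1)]

theorem nbrSum_cycleSun_inl (hm : 3 ≤ m) (f : Fin m ⊕ Fin m → ℕ) (i : Fin m) :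
    nbrSum (cycleSun m) f (.inl i) =
      f (.inl (i + 1)) + f (.inl (i - 1)) + f (.inr i) + f (.inr (i - 1)) := by
  rw [nbrSum_eq_sum (s := {.inl (i + 1), .inl (i - 1), .inr i, .inr (i - 1)})]
  · simp [Fin.add_one_ne_sub_one hm, (Fin.sub_one_ne_self (by omega) i).symm, add_assoc]
  · rintro (j | j)
    · simp [cycleSun_adj_inl_inl (by omega : 2 ≤ m)]
    · simp [cycleSun_adj_inl_inr]

theorem nbrSum_cycleSun_inr (hm : 2 ≤ m) (f : Fin m ⊕ Fin m → ℕ) (j : Fin m) :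
    nbrSum (cycleSun m) f (.inr j) = f (.inl j) + f (.inl (j + 1)) := by
  rw [nbrSum_eq_sum (s := {.inl j, .inl (j + 1)})]
  · simp [Fin.self_ne_add_one hm]
  · rintro (i | i)
    · simp [cycleSun_adj_inr_inl]
    · exact iff_of_false (by simp) id

theorem deg_cycleSun_inl (hm : 3 ≤ m) (i : Fin m) : deg (cycleSun m) (.inl i) = 4 := by
  rw [← nbrSum_one, nbrSum_cycleSun_inl hm]

end CycleSun

section CycleSunColoring

variable {m : ℕ} [NeZero m]

theorem isAdditiveColoring_cycleSun_of (hm : 2 ≤ m) {k : ℕ} {f : Fin m ⊕ Fin m → ℕ}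
    (hbound : ∀ x, 1 ≤ f x ∧ f x ≤ k)
    (hcycle : ∀ i, nbrSum (cycleSun m) f (.inl i) ≠ nbrSum (cycleSun m) f (.inl (i + 1)))
    (hsep : ∀ i j, nbrSum (cycleSun m) f (.inr j) < nbrSum (cycleSun m) f (.inl i)) :
    IsAdditiveColoring (cycleSun m) k f := by
  refine ⟨hbound, ?_⟩
  rintro (i | j) (i' | j') hadj
  · rcases (cycleSun_adj_inl_inl hm i i').1 hadj with rfl | rfl
    · exact hcycle i
    · simpa using (hcycle (i - 1)).symm
  · exact (hsep i j').ne'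
  · exact (hsep i' j).ne
  · exact hadj.elim

def sunLabel (a : Fin m → ℕ) : Fin m ⊕ Fin m → ℕ :=
  Sum.elim a fun i => 3 - a i

theorem nbrSum_sunLabel_inl (hm : 3 ≤ m) {a : Fin m → ℕ} (ha : ∀ i, a i ≤ 2) (i : Fin m) :
    nbrSum (cycleSun m) (sunLabel a) (.inl i) + a i = 6 + a (i + 1) := by
  rw [nbrSum_cycleSun_inl hm]
  simp only [sunLabel, Sum.elim_inl, Sum.elim_inr]
  have := ha i
  have := ha (i - 1)
  omega

theorem nbrSum_sunLabel_inl_mem (hm : 3 ≤ m) {a : Fin m → ℕ} (ha : ∀ i, 1 ≤ a i ∧ a i ≤ 2)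
    (i : Fin m) :
    5 ≤ nbrSum (cycleSun m) (sunLabel a) (.inl i) ∧
      nbrSum (cycleSun m) (sunLabel a) (.inl i) ≤ 7 := by
  have := nbrSum_sunLabel_inl hm (fun i => (ha i).2) i
  have := ha i
  have := ha (i + 1)
  omega

theorem nbrSum_sunLabel_inr_le (hm : 2 ≤ m) {a : Fin m → ℕ} (ha : ∀ i, a i ≤ 2) (j : Fin m) :
    nbrSum (cycleSun m) (sunLabel a) (.inr j) ≤ 4 := by
  rw [nbrSum_cycleSun_inr hm]
  exact Nat.add_le_add (ha j) (ha (j + 1))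

theorem nbrSum_sunLabel_inr_lt_inl (hm : 3 ≤ m) {a : Fin m → ℕ} (ha : ∀ i, 1 ≤ a i ∧ a i ≤ 2)
    (i j : Fin m) :
    nbrSum (cycleSun m) (sunLabel a) (.inr j) < nbrSum (cycleSun m) (sunLabel a) (.inl i) :=
  (nbrSum_sunLabel_inr_le (by omega) (fun i => (ha i).2) j).trans_lt
    (nbrSum_sunLabel_inl_mem hm ha i).1

theorem isAdditiveColoring_sunLabel (hm : 3 ≤ m) {a : Fin m → ℕ} (ha : ∀ i, 1 ≤ a i ∧ a i ≤ 2)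
    (hrun : ∀ i, a (i - 1) = a i → a i ≠ a (i + 1)) :
    IsAdditiveColoring (cycleSun m) 2 (sunLabel a) := by
  refine isAdditiveColoring_cycleSun_of (by omega) ?_ ?_ (nbrSum_sunLabel_inr_lt_inl hm ha)
  · rintro (i | i) <;> simp only [sunLabel, Sum.elim_inl, Sum.elim_inr] <;> have := ha i <;> omega
  · intro i
    have hi := nbrSum_sunLabel_inl hm (fun i => (ha i).2) i
    have hi' := nbrSum_sunLabel_inl hm (fun i => (ha i).2) (i + 1)
    have hrun' := hrun (i + 1)
    rw [add_sub_cancel_right] at hrun'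
    have := ha i
    have := ha (i + 1)
    have := ha (i + 1 + 1)
    omega

end CycleSunColoring

section ParityLabel

def parityLabel (m : ℕ) (i : Fin m) : ℕ :=
  1 + i.val % 2

variable {m : ℕ}

theorem parityLabel_mem (i : Fin m) : 1 ≤ parityLabel m i ∧ parityLabel m i ≤ 2 := by
  unfold parityLabel
  omega

theorem sum_parityLabel : ∑ i, parityLabel m i = m + m / 2 := by
  unfold parityLabel
  rw [Fin.sum_univ_eq_sum_range (fun i => 1 + i % 2)]
  induction m with
  | zero => rfl
  | succ n ih =>
    rw [Finset.sum_range_succ, ih]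
    omega

theorem parityLabel_run [NeZero m] (hm : 2 ≤ m) (i : Fin m) :
    parityLabel m (i - 1) = parityLabel m i → parityLabel m i ≠ parityLabel m (i + 1) := by
  intro hprev
  by_cases hlast : i.val + 1 < m
  · rw [parityLabel, parityLabel, Fin.val_add_one_of_lt' hlast]
    omega
  · have hi : i ≠ 0 := by
      rw [Ne, Fin.ext_iff, Fin.val_zero]
      omega
    rw [parityLabel, parityLabel, Fin.val_sub_one_of_ne_zero hi] at hprev
    omega

end ParityLabel

section WheelSun

variable {m : ℕ}

theorem nbrSum_wheelSun_inl_inl (f : (Fin m ⊕ Fin m) ⊕ Fin 1 → ℕ) (i : Fin m) :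
    nbrSum (wheelSun m) f (.inl (.inl i)) =
      nbrSum (cycleSun m) (f ∘ .inl) (.inl i) + f (.inr 0) := by
  unfold nbrSum
  rw [Finset.sum_filter, Finset.sum_filter, Fintype.sum_sum_type, Fin.sum_univ_one,
    if_pos (show (wheelSun m).Adj (.inl (.inl i)) (.inr 0) from trivial)]
  rfl

theorem nbrSum_wheelSun_inl_inr (f : (Fin m ⊕ Fin m) ⊕ Fin 1 → ℕ) (j : Fin m) :
    nbrSum (wheelSun m) f (.inl (.inr j)) = nbrSum (cycleSun m) (f ∘ .inl) (.inr j) := by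
  unfold nbrSum
  rw [Finset.sum_filter, Finset.sum_filter, Fintype.sum_sum_type, Fin.sum_univ_one,
    if_neg (show ¬(wheelSun m).Adj (.inl (.inr j)) (.inr 0) from id), add_zero]
  rfl

theorem nbrSum_wheelSun_inr (f : (Fin m ⊕ Fin m) ⊕ Fin 1 → ℕ) (w : Fin 1) :
    nbrSum (wheelSun m) f (.inr w) = ∑ i, f (.inl (.inl i)) := by
  unfold nbrSum
  rw [Finset.sum_filter, Fintype.sum_sum_type, Fintype.sum_sum_type, Fin.sum_univ_one,
    if_neg (show ¬(wheelSun m).Adj (.inr w) (.inr 0) from id), add_zero]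
  refine (add_eq_left.2 (Finset.sum_eq_zero fun j _ => if_neg id)).trans ?_
  exact Finset.sum_congr rfl fun i _ => if_pos trivial

theorem deg_wheelSun_inl_inl [NeZero m] (hm : 3 ≤ m) (i : Fin m) :
    deg (wheelSun m) (.inl (.inl i)) = 5 := by
  rw [← nbrSum_one, nbrSum_wheelSun_inl_inl, nbrSum_cycleSun_inl hm]
  rfl

end WheelSun

section WheelSunColoring

variable {m : ℕ}

theorem isAdditiveColoring_wheelSun_of {k h : ℕ} {f : Fin m ⊕ Fin m → ℕ}
    (hf : IsAdditiveColoring (cycleSun m) k f)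
    (hsep : ∀ i j, nbrSum (cycleSun m) f (.inr j) < nbrSum (cycleSun m) f (.inl i))
    (hh : 1 ≤ h ∧ h ≤ k) (hhub : ∀ i, ∑ j, f (.inl j) ≠ nbrSum (cycleSun m) f (.inl i) + h) :
    IsAdditiveColoring (wheelSun m) k (Sum.elim f fun _ => h) := by
  refine ⟨fun x => x.rec hf.1 fun _ => hh, ?_⟩
  rintro ((i | j) | w) ((i' | j') | w') hadj <;>
    simp only [nbrSum_wheelSun_inl_inl, nbrSum_wheelSun_inl_inr, nbrSum_wheelSun_inr,
      Sum.elim_comp_inl, Sum.elim_inl, Sum.elim_inr]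
  · exact fun e => hf.2 (.inl i) (.inl i') hadj (Nat.add_right_cancel e)
  · have := hsep i j'
    omega
  · exact (hhub i).symm
  · have := hsep i' j
    omega
  all_goals first
    | exact hhub _
    | exact absurd hadj id

theorem isAdditiveColoring_wheelSun_sunLabel [NeZero m] (hm : 3 ≤ m) {a : Fin m → ℕ}
    (ha : ∀ i, 1 ≤ a i ∧ a i ≤ 2) (hrun : ∀ i, a (i - 1) = a i → a i ≠ a (i + 1)) {h : ℕ}
    (hh : 1 ≤ h ∧ h ≤ 2) (hsum : ∑ i, a i < 5 + h ∨ 7 + h < ∑ i, a i) :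
    IsAdditiveColoring (wheelSun m) 2 (Sum.elim (sunLabel a) fun _ => h) := by
  refine isAdditiveColoring_wheelSun_of (isAdditiveColoring_sunLabel hm ha hrun)
    (nbrSum_sunLabel_inr_lt_inl hm ha) hh fun i => ?_
  have := nbrSum_sunLabel_inl_mem hm ha i
  change ∑ i, a i ≠ _
  omega

-- On five vertices the hub sum of every `sunLabel` collides with some `σ(uᵢ) + h`,
-- so the sun labels are chosen by hand.
theorem isAdditiveColoring_wheelSun_five :
    IsAdditiveColoring (wheelSun 5) 2
      (Sum.elim (Sum.elim (parityLabel 5) ![2, 2, 1, 1, 2]) fun _ => 2) := by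
  have hsep : ∀ i j : Fin 5,
      nbrSum (cycleSun 5) (Sum.elim (parityLabel 5) ![2, 2, 1, 1, 2]) (.inr j) <
        nbrSum (cycleSun 5) (Sum.elim (parityLabel 5) ![2, 2, 1, 1, 2]) (.inl i) := by
    simp only [nbrSum_cycleSun_inl (by norm_num : 3 ≤ 5),
      nbrSum_cycleSun_inr (by norm_num : 2 ≤ 5)]
    decide
  refine isAdditiveColoring_wheelSun_of
    (isAdditiveColoring_cycleSun_of (by norm_num) (by decide) ?_ hsep) hsep (by norm_num) ?_
  all_goals
    simp only [nbrSum_cycleSun_inl (by norm_num : 3 ≤ 5)]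
    decide

theorem exists_isAdditiveColoring_wheelSun (hm : 3 ≤ m) :
    ∃ f, IsAdditiveColoring (wheelSun m) 2 f := by
  rcases eq_or_ne m 5 with rfl | h5
  · exact ⟨_, isAdditiveColoring_wheelSun_five⟩
  have : NeZero m := ⟨by omega⟩
  refine ⟨_, isAdditiveColoring_wheelSun_sunLabel hm parityLabel_mem
    (parityLabel_run (by omega)) (h := if m ≤ 4 then 2 else 1) (by split_ifs <;> omega) ?_⟩
  rw [sum_parityLabel]
  split_ifs <;> omega

end WheelSunColoring

/-- For `m ≥ 4`, the cycle sun and the wheel sun have additive chromatic number `2`. -/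
theorem eta_cycleSun_wheelSun (m : ℕ) (hm : 4 ≤ m) :
    eta (cycleSun m) = 2 ∧ eta (wheelSun m) = 2 := by
  have : NeZero m := ⟨by omega⟩
  have hadj : (cycleSun m).Adj (.inl 0) (.inl 1) :=
    (cycleSun_adj_inl_inl (by omega) 0 1).2 (.inl (zero_add 1).symm)
  constructor
  · refine eta_eq_two ⟨_, isAdditiveColoring_sunLabel (by omega) parityLabel_mem
      (parityLabel_run (by omega))⟩ hadj ?_
    rw [deg_cycleSun_inl (by omega), deg_cycleSun_inl (by omega)]
  · refine eta_eq_two (exists_isAdditiveColoring_wheelSun (by omega))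
      (show (wheelSun m).Adj (.inl (.inl 0)) (.inl (.inl 1)) from hadj) ?_
    rw [deg_wheelSun_inl_inl (by omega), deg_wheelSun_inl_inl (by omega)]
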